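/- arXiv:1307.4255 — 5 statements merged into one kernel-verified Lean document; each statement's English description precedes it below -/
import Mathlib

section
/- If ψ : (0,∞) → (0,∞) is continuous and increasing with ∫_0^∞ dx/ψ(x) < ∞, and z : [0,T] → ℝ is differentiable with z'(t) ≥ ψ(-z(t) - M) whenever -z(t) - M > 0, and z(0) = z₀ with -z₀ - M > 0, then the time ζ needed for z to reach the level y (with y + M < 0 and z₀ < y) satisfies ζ ≤ ∫_{-y-M}^{∞} du/ψ(u) whenever z stays below y up to time ζ. -/
open MeasureTheory Set

/-- Differential-inequality estimate: if z' ≥ ψ(-z - M) while z stays below y < -M,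
and ∫_0^∞ du/ψ(u) < ∞, then the time ζ at which z reaches y satisfies
ζ ≤ ∫_{-y-M}^∞ du/ψ(u). -/
theorem transit_time_bound (ψ : ℝ → ℝ)
    (hcont : ContinuousOn ψ (Ioi 0)) (hmono : StrictMonoOn ψ (Ioi 0))
    (hpos : ∀ x > (0:ℝ), 0 < ψ x)
    (hint : IntegrableOn (fun u => 1 / ψ u) (Ioi 0))
    (M y z₀ T : ℝ) (hM : 0 < M) (hy : y < -M) (hz₀ : z₀ < y)
    (z : ℝ → ℝ) (hdiff : ∀ t ∈ Icc 0 T, DifferentiableAt ℝ z t)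
    (hz00 : z 0 = z₀)
    (hineq : ∀ t ∈ Icc 0 T, z t ≤ y → ψ (-z t - M) ≤ deriv z t)
    (ζ : ℝ) (hζ : ζ ∈ Icc 0 T) (hzζ : z ζ = y)
    (hbelow : ∀ t ∈ Ico 0 ζ, z t < y) :
    ζ ≤ ∫ u in Ioi (-y - M), 1 / ψ u := by
  set f : ℝ → ℝ := fun u => 1 / ψ u with hf
  have hyM : (0:ℝ) < -y - M := by linarith
  set c : ℝ := (-y - M) / 2 with hcdef
  have hc : 0 < c := by positivity
  have hcy : c < -y - M := by simp only [hcdef]; linarith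
  -- continuity of f on Ioi 0
  have hfcont : ContinuousOn f (Ioi 0) :=
    continuousOn_const.div hcont (fun x hx => (hpos x hx).ne')
  -- integrability pieces
  have hint_sub : ∀ {s : Set ℝ}, s ⊆ Ioi 0 → IntegrableOn f s :=
    fun {s} hs => hint.mono_set hs
  -- derivative of G
  set G : ℝ → ℝ := fun x => (∫ u in Ioi c, f u) - ∫ u in c..x, f u with hG
  have hGderiv : ∀ a, c < a → HasDerivAt G (-(f a)) a := by
    intro a ha
    have ha0 : (0:ℝ) < a := hc.trans ha
    have hII : IntervalIntegrable f volume c a := by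
      apply (hint_sub ?_).intervalIntegrable
      intro x hx
      rcases le_total c a with h | h
      · rw [uIcc_of_le h] at hx; exact lt_of_lt_of_le hc hx.1
      · rw [uIcc_of_ge h] at hx; exact lt_of_lt_of_le ha0 hx.1
    have hmeas : StronglyMeasurableAtFilter f (nhds a) :=
      hfcont.stronglyMeasurableAtFilter isOpen_Ioi a ha0
    have hca : ContinuousAt f a := by
      have := hfcont.continuousAt (isOpen_Ioi.mem_nhds ha0)
      exact this
    exact (intervalIntegral.integral_hasDerivAt_right hII hmeas hca).const_sub _
  -- value of G at points > c
  have hGval : ∀ x, c < x → G x = ∫ u in Ioi x, f u := by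
    intro x hx
    have hsplit : Ioc c x ∪ Ioi x = Ioi c := Ioc_union_Ioi_eq_Ioi hx.le
    have h1 : IntegrableOn f (Ioc c x) := hint_sub (fun u hu => hc.trans_le hu.1.le)
    have h2 : IntegrableOn f (Ioi x) := hint_sub (fun u hu => (hc.trans hx).trans hu)
    have hdisj : Disjoint (Ioc c x) (Ioi x) := by
      apply disjoint_left.2
      intro u hu hu'
      exact absurd hu.2 (not_le.2 hu')
    have := setIntegral_union hdisj measurableSet_Ioi h1 h2 (f := f) (μ := volume)
    rw [hsplit] at this
    simp only [hG]
    rw [intervalIntegral.integral_of_le hx.le, this]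
    ring
  -- z t ≤ y on [0, ζ]
  have hley : ∀ t ∈ Icc 0 ζ, z t ≤ y := by
    intro t ht
    rcases eq_or_lt_of_le ht.2 with h | h
    · rw [h, hzζ]
    · exact (hbelow t ⟨ht.1, h⟩).le
  have hζT : Icc (0:ℝ) ζ ⊆ Icc 0 T := Icc_subset_Icc le_rfl hζ.2
  -- derivative of g
  set g : ℝ → ℝ := fun t => G (-z t - M) - t with hg
  have hgderiv : ∀ t ∈ Icc 0 ζ, HasDerivAt g (deriv z t / ψ (-z t - M) - 1) t := by
    intro t ht
    have htT : t ∈ Icc 0 T := hζT ht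
    have hzt : z t ≤ y := hley t ht
    have hat : c < -z t - M := by linarith
    have hz' : HasDerivAt z (deriv z t) t := (hdiff t htT).hasDerivAt
    have ha' : HasDerivAt (fun t => -z t - M) (-deriv z t) t := hz'.neg.sub_const M
    have hcomp : HasDerivAt (fun t => G (-z t - M)) (-(f (-z t - M)) * (-deriv z t)) t :=
      (hGderiv _ hat).comp (h₂ := G) (h := fun t => -z t - M) t ha'
    have : HasDerivAt g (-(f (-z t - M)) * (-deriv z t) - 1) t := by
      have h2 := hcomp.sub (hasDerivAt_id t)
      exact h2
    convert this using 1
    have hψ : ψ (-z t - M) ≠ 0 := (hpos _ (hc.trans hat)).ne'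
    simp only [hf]
    field_simp
  -- g is monotone on [0, ζ]
  have h0ζ : (0:ℝ) ≤ ζ := hζ.1
  have hmonog : MonotoneOn g (Icc 0 ζ) := by
    apply monotoneOn_of_deriv_nonneg (convex_Icc 0 ζ)
    · exact fun t ht => ((hgderiv t ht).continuousAt).continuousWithinAt
    · intro t ht
      rw [interior_Icc] at ht
      exact ((hgderiv t (Ioo_subset_Icc_self ht)).differentiableAt).differentiableWithinAt
    · intro t ht
      rw [interior_Icc] at ht
      have ht' : t ∈ Icc 0 ζ := Ioo_subset_Icc_self ht
      rw [(hgderiv t ht').deriv]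
      have hψpos : 0 < ψ (-z t - M) := hpos _ (by have := hley t ht'; linarith)
      have hge : ψ (-z t - M) ≤ deriv z t := hineq t (hζT ht') (hley t ht')
      have : (1:ℝ) ≤ deriv z t / ψ (-z t - M) := (one_le_div hψpos).2 hge
      linarith
  have hkey := hmonog (left_mem_Icc.2 h0ζ) (right_mem_Icc.2 h0ζ) h0ζ
  -- unfold
  have haz0 : c < -z₀ - M := by linarith
  have hg0 : g 0 = ∫ u in Ioi (-z₀ - M), f u := by
    simp only [hg, hz00, sub_zero]
    exact hGval _ haz0
  have hgζ : g ζ = (∫ u in Ioi (-y - M), f u) - ζ := by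
    simp only [hg, hzζ]
    rw [hGval _ hcy]
  have hnn : 0 ≤ ∫ u in Ioi (-z₀ - M), f u := by
    apply setIntegral_nonneg measurableSet_Ioi
    intro u hu
    have hu0 : 0 < u := lt_trans (hc.trans haz0) hu
    have := hpos u hu0
    positivity
  rw [hg0, hgζ] at hkey
  linarith
end

section
/- There exists a constant C₀ > 0 (depending on μ) such that for all real η ≤ -1 and all y ∈ ℝ, the WKB remainder R(y) = (Q''(y)/(4Q(y)) - 5(Q'(y))²/(16 Q(y)²)) / √(Q(y)), with Q = Q_η(y) = y + (y²-μ)²/4 - η, satisfies |R(y)| ≤ C₀/(|η| + y⁴). Consequently ∫_ℝ |R(y)| dy ≤ C |η|^{-3/4} for some constant C. -/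
set_option maxHeartbeats 1000000

open MeasureTheory

/-- The quartic potential Q_η(y) = y + (y²-μ)²/4 - η. -/
noncomputable def Qsaddle (μ η y : ℝ) : ℝ := y + (y ^ 2 - μ) ^ 2 / 4 - η

/-- The WKB remainder R = (Q''/(4Q) - 5(Q')²/(16Q²)) / √Q, with
Q' (y) = 1 + y(y²-μ) and Q''(y) = 3y² - μ. -/
noncomputable def Rwkb (μ η y : ℝ) : ℝ :=
  ((3 * y ^ 2 - μ) / (4 * Qsaddle μ η y)
    - 5 * (1 + y * (y ^ 2 - μ)) ^ 2 / (16 * (Qsaddle μ η y) ^ 2))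
    / Real.sqrt (Qsaddle μ η y)

lemma rwkb_meas (μ η : ℝ) : Measurable (fun y => Rwkb μ η y) := by
  unfold Rwkb Qsaddle
  fun_prop

lemma integrable_quartic : Integrable (fun t : ℝ => (1:ℝ) / (1 + t ^ 4)) := by
  have h : Integrable (fun t : ℝ => 2 * (1 + t ^ 2)⁻¹) := integrable_inv_one_add_sq.const_mul 2
  refine h.mono ?_ ?_
  · apply Measurable.aestronglyMeasurable
    measurability
  · filter_upwards with t
    have h4 : (0:ℝ) < 1 + t ^ 4 := by positivity
    have h2 : (0:ℝ) < 1 + t ^ 2 := by positivity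
    rw [Real.norm_eq_abs, Real.norm_eq_abs, abs_of_pos (by positivity), abs_of_pos (by positivity)]
    rw [div_le_iff₀ h4, mul_comm (2:ℝ), mul_assoc, inv_mul_eq_div, le_div_iff₀ h2]
    nlinarith [sq_nonneg (2 * t ^ 2 - 1)]

lemma quartic_scale_eq (a : ℝ) (ha : 0 < a) (y : ℝ) :
    (1:ℝ) / (a + y ^ 4) = a⁻¹ * (1 / (1 + (a ^ (-(1:ℝ)/4) * y) ^ 4)) := by
  have hb4 : (a ^ (-(1:ℝ)/4)) ^ 4 = a⁻¹ := by
    rw [← Real.rpow_natCast (a ^ (-(1:ℝ)/4)) 4, ← Real.rpow_mul ha.le]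
    norm_num [Real.rpow_neg_one]
  have h1 : 1 + (a ^ (-(1:ℝ)/4) * y) ^ 4 = a⁻¹ * (a + y ^ 4) := by
    rw [mul_pow, hb4]; field_simp
  rw [h1, mul_one_div]
  field_simp

lemma integrable_quartic_scaled (a : ℝ) (ha : 0 < a) :
    Integrable (fun y : ℝ => (1:ℝ) / (a + y ^ 4)) := by
  have hb : 0 < a ^ (-(1:ℝ)/4) := Real.rpow_pos_of_pos ha _
  have h := (integrable_quartic.comp_mul_left' hb.ne').const_mul a⁻¹
  refine h.congr ?_
  filter_upwards with y
  exact (quartic_scale_eq a ha y).symm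

lemma integral_quartic_scale (a : ℝ) (ha : 0 < a) :
    (∫ y : ℝ, (1:ℝ) / (a + y ^ 4))
      = a ^ (-(3:ℝ)/4) * ∫ t : ℝ, (1:ℝ) / (1 + t ^ 4) := by
  have hb : 0 < a ^ (-(1:ℝ)/4) := Real.rpow_pos_of_pos ha _
  simp_rw [quartic_scale_eq a ha]
  rw [integral_const_mul,
    Measure.integral_comp_mul_left (fun t => 1 / (1 + t ^ 4)) (a ^ (-(1:ℝ)/4))]
  rw [smul_eq_mul, abs_of_pos (inv_pos.2 hb), ← mul_assoc]
  congr 1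
  rw [← Real.rpow_neg_one a, ← Real.rpow_neg ha.le, ← Real.rpow_add ha]
  norm_num

lemma pointwise_bound (μ η y : ℝ) (hη : η ≤ -(2 * ((1 + |μ|) ^ 2 + 1))) :
    |Rwkb μ η y| ≤ (16 * (3 + |μ|) + 960 * (2 + μ ^ 2)) / (|η| + y ^ 4) := by
  have hM : 0 ≤ |μ| := abs_nonneg μ
  have hμ1 : μ ≤ |μ| := le_abs_self μ
  have hμ2 : -|μ| ≤ μ := neg_abs_le μ
  have hη0 : η < 0 := lt_of_le_of_lt hη (by nlinarith)
  have ha : 2 * ((1 + |μ|) ^ 2 + 1) ≤ |η| := by rw [abs_of_neg hη0]; linarith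
  have ha4 : (4:ℝ) ≤ |η| := by nlinarith [sq_nonneg (1 + |μ|)]
  have hQa : Qsaddle μ η y = y + (y ^ 2 - μ) ^ 2 / 4 + |η| := by
    rw [Qsaddle, abs_of_neg hη0]; ring
  have hy4 : (0:ℝ) ≤ y ^ 4 := by positivity
  set D := |η| + y ^ 4 with hDdef
  set Q := Qsaddle μ η y with hQdef
  set w := Real.sqrt D with hwdef
  set s := Real.sqrt Q with hsdef
  have hsQ : Real.sqrt Q = s := rfl
  clear_value D Q w s
  have hD4 : (4:ℝ) ≤ D := by rw [hDdef]; linarith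
  have hD0 : (0:ℝ) < D := by linarith
  have hP : y ^ 4 / 16 - ((1 + |μ|) ^ 2 + 1) ≤ y + (y ^ 2 - μ) ^ 2 / 4 := by
    nlinarith [sq_nonneg (y + 1), sq_nonneg (y ^ 2 - 4 * (1 + |μ|) / 3), sq_nonneg μ,
      sq_nonneg (1 + |μ|), sq_nonneg y]
  have hQ : D / 16 ≤ Q := by rw [hQa, hDdef]; linarith
  have hQ0 : 0 < Q := by linarith
  have hw0 : 0 < w := by rw [hwdef]; exact Real.sqrt_pos.2 hD0
  have hw1 : 1 ≤ w := by
    rw [hwdef, show (1:ℝ) = Real.sqrt 1 from (Real.sqrt_one).symm]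
    exact Real.sqrt_le_sqrt (by linarith)
  have hw2 : w ^ 2 = D := by rw [hwdef]; exact Real.sq_sqrt hD0.le
  have hy2 : y ^ 2 ≤ w := by
    rw [hwdef, show y ^ 2 = Real.sqrt ((y ^ 2) ^ 2) from (Real.sqrt_sq (by positivity)).symm]
    exact Real.sqrt_le_sqrt (by rw [hDdef]; nlinarith [abs_nonneg η])
  have hs : w / 4 ≤ s := by
    have h4 : Real.sqrt 16 = 4 := by
      rw [show (16:ℝ) = 4 ^ 2 by norm_num, Real.sqrt_sq (by norm_num : (0:ℝ) ≤ 4)]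
    have h16 : Real.sqrt (D / 16) = w / 4 := by
      rw [hwdef, Real.sqrt_div' D (by norm_num : (0:ℝ) ≤ 16), h4]
    rw [← h16, hsdef]
    exact Real.sqrt_le_sqrt hQ
  have hs0 : 0 < s := by linarith
  -- bound on T1
  have habs : |3 * y ^ 2 - μ| ≤ (3 + |μ|) * w := by
    rw [abs_le]
    constructor <;> nlinarith [sq_nonneg y]
  have hT1 : |(3 * y ^ 2 - μ) / (4 * Q)| ≤ 4 * (3 + |μ|) * w / D := by
    rw [abs_div, abs_of_pos (by positivity : (0:ℝ) < 4 * Q),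
      div_le_div_iff₀ (by positivity) hD0]
    have step1 : |3 * y ^ 2 - μ| * D ≤ ((3 + |μ|) * w) * D :=
      mul_le_mul_of_nonneg_right habs hD0.le
    have step2 : ((3 + |μ|) * w) * D ≤ ((3 + |μ|) * w) * (16 * Q) := by
      apply mul_le_mul_of_nonneg_left (by linarith) (by positivity)
    nlinarith [step1, step2]
  -- bound on T2
  have hQ'sq : (1 + y * (y ^ 2 - μ)) ^ 2 ≤ 3 * (2 + μ ^ 2) * (D * w) := by
    have h1 : (1:ℝ) ≤ D * w := by nlinarith
    have h6 : y ^ 4 * y ^ 2 ≤ D * w := mul_le_mul (by linarith) hy2 (by positivity) hD0.le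
    have hμy : μ ^ 2 * y ^ 2 ≤ μ ^ 2 * (D * w) := by
      apply mul_le_mul_of_nonneg_left _ (sq_nonneg μ)
      nlinarith [mul_nonneg (by linarith : (0:ℝ) ≤ D - 1) hw0.le]
    nlinarith [sq_nonneg (1 - y ^ 3), sq_nonneg (1 + μ * y), sq_nonneg (y ^ 3 + μ * y)]
  have hT2 : 5 * (1 + y * (y ^ 2 - μ)) ^ 2 / (16 * Q ^ 2) ≤ 240 * (2 + μ ^ 2) * w / D := by
    rw [div_le_div_iff₀ (by positivity) hD0]
    have hB : D ^ 2 / 256 ≤ Q ^ 2 := by nlinarith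
    have step1 : (1 + y * (y ^ 2 - μ)) ^ 2 * (5 * D) ≤ 3 * (2 + μ ^ 2) * (D * w) * (5 * D) :=
      mul_le_mul_of_nonneg_right hQ'sq (by linarith)
    have step2 : (240 * 16 * (2 + μ ^ 2) * w) * (D ^ 2 / 256)
        ≤ (240 * 16 * (2 + μ ^ 2) * w) * Q ^ 2 :=
      mul_le_mul_of_nonneg_left hB (by positivity)
    nlinarith [step1, step2]
  -- combine
  have hRwkb : Rwkb μ η y
      = ((3 * y ^ 2 - μ) / (4 * Q) - 5 * (1 + y * (y ^ 2 - μ)) ^ 2 / (16 * Q ^ 2)) / s := by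
    rw [Rwkb, ← hQdef, hsQ]
  set T1 := (3 * y ^ 2 - μ) / (4 * Q) with hT1def
  set T2 := 5 * (1 + y * (y ^ 2 - μ)) ^ 2 / (16 * Q ^ 2) with hT2def
  have hT2nn : 0 ≤ T2 := by rw [hT2def]; positivity
  have hsum : |T1 - T2| ≤ (4 * (3 + |μ|) + 240 * (2 + μ ^ 2)) * w / D := by
    have h1 : |T1 - T2| ≤ |T1| + |T2| := by
      rw [sub_eq_add_neg]
      exact (abs_add_le _ _).trans (by rw [abs_neg])
    have h2 : |T2| = T2 := abs_of_nonneg hT2nn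
    calc |T1 - T2| ≤ |T1| + |T2| := h1
      _ ≤ 4 * (3 + |μ|) * w / D + 240 * (2 + μ ^ 2) * w / D := by
          rw [h2]; exact add_le_add hT1 hT2
      _ = (4 * (3 + |μ|) + 240 * (2 + μ ^ 2)) * w / D := by ring
  rw [hRwkb, abs_div, abs_of_nonneg hs0.le]
  calc |T1 - T2| / s ≤ ((4 * (3 + |μ|) + 240 * (2 + μ ^ 2)) * w / D) / (w / 4) :=
        div_le_div₀ (by positivity) hsum (by positivity) hs
    _ = (16 * (3 + |μ|) + 960 * (2 + μ ^ 2)) / D := by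
        field_simp
        ring

/-- There are η₀ < 0 and constants C₀, C > 0 such that for all η ≤ η₀,
|R(y)| ≤ C₀/(|η| + y⁴) for all y, and ∫_ℝ |R(y)| dy ≤ C |η|^{-3/4}. -/
theorem wkb_remainder_bound (μ : ℝ) :
    ∃ η₀ : ℝ, η₀ < 0 ∧ ∃ C₀ > (0:ℝ), ∃ C > (0:ℝ), ∀ η ≤ η₀,
      (∀ y : ℝ, |Rwkb μ η y| ≤ C₀ / (|η| + y ^ 4)) ∧
      (∫ y : ℝ, |Rwkb μ η y|) ≤ C * |η| ^ (-(3:ℝ)/4) := by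
  set C₀ := 16 * (3 + |μ|) + 960 * (2 + μ ^ 2) with hC0
  have hC0pos : 0 < C₀ := by positivity
  set I := ∫ t : ℝ, (1:ℝ) / (1 + t ^ 4) with hI
  have hInn : 0 ≤ I := integral_nonneg (fun t => by positivity)
  refine ⟨-(2 * ((1 + |μ|) ^ 2 + 1)), by nlinarith [sq_nonneg (1 + |μ|), abs_nonneg μ],
    C₀, hC0pos, C₀ * I + 1, by positivity, fun η hη => ?_⟩
  have hpt := fun y => pointwise_bound μ η y hη
  refine ⟨hpt, ?_⟩
  have hη0 : η < 0 := lt_of_le_of_lt hη (by nlinarith [sq_nonneg (1 + |μ|), abs_nonneg μ])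
  have ha : 0 < |η| := abs_pos.2 hη0.ne
  -- dominating function
  have hdom : Integrable (fun y : ℝ => C₀ * (1 / (|η| + y ^ 4))) :=
    (integrable_quartic_scaled |η| ha).const_mul C₀
  have hle : ∀ y : ℝ, |Rwkb μ η y| ≤ C₀ * (1 / (|η| + y ^ 4)) := by
    intro y
    rw [mul_one_div]
    exact hpt y
  have hRint : Integrable (fun y : ℝ => |Rwkb μ η y|) := by
    refine hdom.mono ((rwkb_meas μ η).abs.aestronglyMeasurable) ?_
    filter_upwards with y
    rw [Real.norm_eq_abs, abs_abs, Real.norm_eq_abs]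
    exact (hle y).trans (le_abs_self _)
  calc (∫ y : ℝ, |Rwkb μ η y|) ≤ ∫ y : ℝ, C₀ * (1 / (|η| + y ^ 4)) :=
        integral_mono hRint hdom hle
    _ = C₀ * (|η| ^ (-(3:ℝ)/4) * I) := by
        rw [integral_const_mul, integral_quartic_scale |η| ha, hI]
    _ ≤ (C₀ * I + 1) * |η| ^ (-(3:ℝ)/4) := by
        have hp : 0 < |η| ^ (-(3:ℝ)/4) := Real.rpow_pos_of_pos ha _
        nlinarith [hp, hC0pos, hInn]
end

section
/- The integral ∫_{-∞}^{∞} (√(1 + y⁴/4) - y²/2) dy equals 3·Γ(-3/4)²/(8√(2π)). -/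
open MeasureTheory
open Real Set

lemma beta_quarter :
    ∫ t in Ioo (0:ℝ) 1, t ^ (-(3/4) : ℝ) * (1 - t) ^ (-(3/4) : ℝ)
      = Real.Gamma (1/4) ^ 2 / Real.Gamma (1/2) := by
  have h := Complex.Gamma_mul_Gamma_eq_betaIntegral
    (s := (1/4 : ℂ)) (t := (1/4 : ℂ)) (by norm_num) (by norm_num)
  rw [Complex.betaIntegral] at h
  have hre : ∫ x in (0:ℝ)..1, (x : ℂ) ^ ((1/4 : ℂ) - 1) * (1 - (x:ℝ) : ℂ) ^ ((1/4:ℂ) - 1)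
      = ((∫ t in Ioo (0:ℝ) 1, t ^ (-(3/4) : ℝ) * (1 - t) ^ (-(3/4) : ℝ) : ℝ) : ℂ) := by
    rw [intervalIntegral.integral_of_le (by norm_num : (0:ℝ) ≤ 1),
      ← integral_Ioc_eq_integral_Ioo]
    refine Eq.trans ?_ integral_ofReal
    refine setIntegral_congr_fun measurableSet_Ioc fun x hx => ?_
    show (x:ℂ) ^ ((1/4:ℂ) - 1) * ((1:ℂ) - (x:ℝ)) ^ ((1/4:ℂ) - 1)
      = ((x ^ (-(3/4):ℝ) * (1 - x) ^ (-(3/4):ℝ) : ℝ) : ℂ)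
    have hx0 : (0:ℝ) ≤ x := le_of_lt hx.1
    have hx1 : (0:ℝ) ≤ 1 - x := by linarith [hx.2]
    push_cast
    rw [Complex.ofReal_cpow hx0, Complex.ofReal_cpow hx1]
    push_cast
    norm_num
  rw [hre] at h
  have h14 : ((1:ℂ)/4 + 1/4) = ((1/2 : ℝ) : ℂ) := by norm_num
  have h14' : ((1:ℂ)/4) = ((1/4 : ℝ) : ℂ) := by norm_num
  rw [h14, h14', Complex.Gamma_ofReal, Complex.Gamma_ofReal] at h
  have hΓ : Real.Gamma (1/2) ≠ 0 := (Real.Gamma_pos_of_pos (by norm_num)).ne'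
  have h' : Real.Gamma (1/4) * Real.Gamma (1/4)
      = Real.Gamma (1/2) * ∫ t in Ioo (0:ℝ) 1, t ^ (-(3/4) : ℝ) * (1 - t) ^ (-(3/4) : ℝ) := by
    exact_mod_cast h
  field_simp
  linarith [h']

lemma image_inv_one_add_pow :
    (fun x : ℝ => (1 + x ^ 4)⁻¹) '' Ioi 0 = Ioo 0 1 := by
  ext t
  constructor
  · rintro ⟨x, hx, rfl⟩
    have hx0 : (0:ℝ) < x := hx
    have h1 : (1:ℝ) < 1 + x ^ 4 := by nlinarith [pow_pos hx0 4]
    exact ⟨inv_pos.mpr (by linarith), inv_lt_one_of_one_lt₀ h1⟩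
  · rintro ⟨ht0, ht1⟩
    have hpos : (0:ℝ) < 1/t - 1 := by
      have : (1:ℝ) < 1/t := by
        rw [lt_div_iff₀ ht0]; linarith
      linarith
    refine ⟨(1/t - 1) ^ ((1:ℝ)/4), rpow_pos_of_pos hpos _, ?_⟩
    have hx4 : ((1/t - 1) ^ ((1:ℝ)/4)) ^ (4:ℕ) = 1/t - 1 := by
      rw [← rpow_natCast ((1/t - 1) ^ ((1:ℝ)/4)) 4, ← rpow_mul hpos.le]
      norm_num
    simp only
    rw [hx4]
    field_simp
    ring

lemma integral_inv_sqrt_one_add_pow4 :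
    ∫ x in Ioi (0:ℝ), (Real.sqrt (1 + x ^ 4))⁻¹
      = Real.Gamma (1/4) ^ 2 / (4 * Real.sqrt π) := by
  have hderiv : ∀ x ∈ Ioi (0:ℝ), HasDerivWithinAt (fun x : ℝ => (1 + x ^ 4)⁻¹)
      (-(4 * x ^ 3) / (1 + x ^ 4) ^ 2) (Ioi 0) x := by
    intro x hx
    have h0 : (1 + x ^ 4) ≠ 0 := by positivity
    have h1 : HasDerivAt (fun x : ℝ => 1 + x ^ 4) (4 * x ^ 3) x := by
      simpa using (hasDerivAt_pow 4 x).const_add 1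
    exact (h1.inv h0).hasDerivWithinAt
  have hinj : InjOn (fun x : ℝ => (1 + x ^ 4)⁻¹) (Ioi 0) := by
    intro a ha b hb hab
    simp only [inv_inj] at hab
    have h4 : a ^ 4 = b ^ 4 := by linarith
    exact (pow_left_strictMonoOn₀ (n := 4) (by norm_num)).injOn (le_of_lt ha) (le_of_lt hb) h4
  have key := integral_image_eq_integral_abs_deriv_smul measurableSet_Ioi hderiv hinj
    (fun t : ℝ => t ^ (-(3/4) : ℝ) * (1 - t) ^ (-(3/4) : ℝ))
  rw [image_inv_one_add_pow] at key
  rw [beta_quarter] at key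
  have heq : ∀ x ∈ Ioi (0:ℝ),
      |(-(4 * x ^ 3) / (1 + x ^ 4) ^ 2)| •
        (((1 + x ^ 4)⁻¹) ^ (-(3/4) : ℝ) * (1 - (1 + x ^ 4)⁻¹) ^ (-(3/4) : ℝ))
      = 4 * (Real.sqrt (1 + x ^ 4))⁻¹ := by
    intro x hx
    have hx0 : (0:ℝ) < x := hx
    have hu : (0:ℝ) < 1 + x ^ 4 := by positivity
    have h1m : 1 - (1 + x ^ 4)⁻¹ = x ^ 4 * (1 + x ^ 4)⁻¹ := by
      field_simp
      ring
    have habs : |(-(4 * x ^ 3) / (1 + x ^ 4) ^ 2)| = 4 * x ^ 3 / (1 + x ^ 4) ^ 2 := by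
      rw [abs_div, abs_neg, abs_of_nonneg (by positivity : (0:ℝ) ≤ 4 * x ^ 3),
        abs_of_nonneg (by positivity : (0:ℝ) ≤ (1 + x ^ 4) ^ 2)]
    rw [habs, h1m, smul_eq_mul]
    set u := 1 + x ^ 4 with hudef
    have e1 : (u⁻¹ : ℝ) ^ (-(3/4):ℝ) = u ^ ((3:ℝ)/4) := by
      rw [inv_rpow hu.le, ← rpow_neg hu.le]; norm_num
    have e2 : ((x ^ 4 : ℝ)) ^ (-(3/4):ℝ) = x ^ (-(3:ℝ)) := by
      rw [← rpow_natCast x 4, ← rpow_mul hx0.le]; norm_num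
    have e3 : (x:ℝ) ^ (3:ℕ) * x ^ (-(3:ℝ)) = 1 := by
      rw [← rpow_natCast x 3, ← rpow_add hx0]; norm_num
    have e4 : u ^ ((3:ℝ)/4) * u ^ ((3:ℝ)/4) / u ^ (2:ℕ) = (Real.sqrt u)⁻¹ := by
      rw [← rpow_add hu, ← rpow_natCast u 2, ← rpow_sub hu,
        show ((3:ℝ)/4 + 3/4 - (2:ℕ)) = -(1/2) by norm_num,
        rpow_neg hu.le, Real.sqrt_eq_rpow]
    rw [mul_rpow (by positivity) (by positivity), e1, e2]
    calc 4 * x ^ 3 / u ^ 2 * (u ^ ((3:ℝ)/4) * (x ^ (-(3:ℝ)) * u ^ ((3:ℝ)/4)))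
        = 4 * ((x : ℝ) ^ (3:ℕ) * x ^ (-(3:ℝ))) * (u ^ ((3:ℝ)/4) * u ^ ((3:ℝ)/4) / u ^ (2:ℕ)) := by
          ring
      _ = 4 * (Real.sqrt u)⁻¹ := by rw [e3, e4]; ring
  rw [setIntegral_congr_fun measurableSet_Ioi heq, MeasureTheory.integral_const_mul,
    Real.Gamma_one_half_eq] at key
  have hπ : Real.sqrt π ≠ 0 := by
    positivity
  field_simp at key ⊢
  linarith

lemma sqrt_one_add_pow4_ge (x : ℝ) : (1 + x ^ 2)/2 ≤ Real.sqrt (1 + x ^ 4) := by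
  rw [show (1 + x^2)/2 = Real.sqrt (((1+x^2)/2)^2) from (Real.sqrt_sq (by positivity)).symm]
  exact Real.sqrt_le_sqrt (by nlinarith [sq_nonneg (x^2 - 1), sq_nonneg x])

lemma g_le (x : ℝ) : Real.sqrt (1 + x ^ 4) - x ^ 2 ≤ 2 * (1 + x ^ 2)⁻¹ := by
  rw [sub_le_iff_le_add]
  rw [show 2 * (1+x^2)⁻¹ + x^2 = Real.sqrt ((2 * (1+x^2)⁻¹ + x^2)^2) from
    (Real.sqrt_sq (by positivity)).symm]
  apply Real.sqrt_le_sqrt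
  have hc : (0:ℝ) < 1 + x ^ 2 := by positivity
  have key : (2 * (1+x^2)⁻¹ + x^2) ^ 2
      = 4 * ((1+x^2)⁻¹)^2 + 4 * x^2 * (1+x^2)⁻¹ + x^4 := by ring
  rw [key]
  have h1 : (1+x^2)⁻¹ * (1+x^2) = 1 := inv_mul_cancel₀ hc.ne'
  nlinarith [sq_nonneg ((1+x^2)⁻¹), sq_nonneg (1 - (1+x^2)⁻¹), sq_nonneg x,
    mul_pos (inv_pos.mpr hc) hc, sq_nonneg (x^2 * (1+x^2)⁻¹)]

lemma g_nonneg (x : ℝ) : 0 ≤ Real.sqrt (1 + x ^ 4) - x ^ 2 := by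
  rw [sub_nonneg, show x^2 = Real.sqrt ((x^2)^2) from (Real.sqrt_sq (by positivity)).symm]
  exact Real.sqrt_le_sqrt (by nlinarith)

lemma g_integrable : Integrable (fun x : ℝ => Real.sqrt (1 + x ^ 4) - x ^ 2) := by
  have hb : Integrable (fun x : ℝ => 2 * (1 + x ^ 2)⁻¹) :=
    (integrable_inv_one_add_sq).const_mul 2
  refine hb.mono ?_ ?_
  · exact ((Real.continuous_sqrt.comp (continuous_const.add (continuous_pow 4))).sub
      (continuous_pow 2)).aestronglyMeasurable
  · refine Filter.Eventually.of_forall fun x => ?_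
    rw [Real.norm_eq_abs, Real.norm_eq_abs, abs_of_nonneg (g_nonneg x),
      abs_of_nonneg (by positivity)]
    exact g_le x

lemma h_integrable : Integrable (fun x : ℝ => (Real.sqrt (1 + x ^ 4))⁻¹) := by
  have hb : Integrable (fun x : ℝ => 2 * (1 + x ^ 2)⁻¹) :=
    (integrable_inv_one_add_sq).const_mul 2
  refine hb.mono ?_ ?_
  · exact ((Real.continuous_sqrt.comp (continuous_const.add
      (continuous_pow 4))).inv₀ (fun x => by
        have : (0:ℝ) < Real.sqrt (1 + x^4) := Real.sqrt_pos.mpr (by positivity)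
        exact this.ne')).aestronglyMeasurable
  · refine Filter.Eventually.of_forall fun x => ?_
    have h1 : (0:ℝ) < (1 + x ^ 2)/2 := by positivity
    have h2 := sqrt_one_add_pow4_ge x
    rw [Real.norm_eq_abs, Real.norm_eq_abs, abs_of_nonneg (by positivity),
      abs_of_nonneg (by positivity)]
    calc (Real.sqrt (1 + x ^ 4))⁻¹ ≤ ((1 + x ^ 2)/2)⁻¹ := by
          apply inv_anti₀ h1 h2
      _ = 2 * (1 + x ^ 2)⁻¹ := by rw [inv_div]; ring

lemma ibp_zero :
    ∫ x in Ioi (0:ℝ),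
      (3 * (Real.sqrt (1 + x ^ 4) - x ^ 2) - 2 * (Real.sqrt (1 + x ^ 4))⁻¹) = 0 := by
  set F : ℝ → ℝ := fun x => x * (Real.sqrt (1 + x ^ 4) - x ^ 2) with hF
  have hFc : Continuous F :=
    continuous_id.mul ((Real.continuous_sqrt.comp
      (continuous_const.add (continuous_pow 4))).sub (continuous_pow 2))
  have hderiv : ∀ x ∈ Ioi (0:ℝ), HasDerivAt F
      (3 * (Real.sqrt (1 + x ^ 4) - x ^ 2) - 2 * (Real.sqrt (1 + x ^ 4))⁻¹) x := by
    intro x _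
    have hu : (0:ℝ) < 1 + x ^ 4 := by positivity
    have hs : (0:ℝ) < Real.sqrt (1 + x ^ 4) := Real.sqrt_pos.mpr hu
    have hsq : Real.sqrt (1 + x ^ 4) ^ 2 = 1 + x ^ 4 := Real.sq_sqrt hu.le
    have h1 : HasDerivAt (fun x : ℝ => 1 + x ^ 4) (4 * x ^ 3) x := by
      simpa using (hasDerivAt_pow 4 x).const_add 1
    have h2 : HasDerivAt (fun x : ℝ => Real.sqrt (1 + x ^ 4))
        (1 / (2 * Real.sqrt (1 + x ^ 4)) * (4 * x ^ 3)) x :=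
      (Real.hasDerivAt_sqrt hu.ne').comp x h1
    have h3 : HasDerivAt (fun x : ℝ => Real.sqrt (1 + x ^ 4) - x ^ 2)
        (1 / (2 * Real.sqrt (1 + x ^ 4)) * (4 * x ^ 3) - 2 * x) x := by
      exact (h2.sub (hasDerivAt_pow 2 x)).congr_deriv (by norm_num)
    have h4 := (hasDerivAt_id x).mul h3
    refine h4.congr_deriv ?_
    simp only [id]
    field_simp
    nlinarith [hsq, hs]
  have hint : IntegrableOn (fun x : ℝ =>
      3 * (Real.sqrt (1 + x ^ 4) - x ^ 2) - 2 * (Real.sqrt (1 + x ^ 4))⁻¹) (Ioi 0) :=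
    ((g_integrable.const_mul 3).sub (h_integrable.const_mul 2)).integrableOn
  have htend : Filter.Tendsto F Filter.atTop (nhds 0) := by
    have hup : ∀ x : ℝ, 1 ≤ x → F x ≤ x⁻¹ := by
      intro x hx1
      have hx0 : (0:ℝ) < x := by linarith
      have hu : (0:ℝ) < 1 + x ^ 4 := by positivity
      have hs : (0:ℝ) < Real.sqrt (1 + x ^ 4) := Real.sqrt_pos.mpr hu
      have hsq : Real.sqrt (1 + x ^ 4) ^ 2 = 1 + x ^ 4 := Real.sq_sqrt hu.le
      have hkey : Real.sqrt (1 + x ^ 4) - x ^ 2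
          = (Real.sqrt (1 + x ^ 4) + x ^ 2)⁻¹ :=
        eq_inv_of_mul_eq_one_left (by nlinarith [hsq])
      have h5 : (Real.sqrt (1 + x ^ 4) + x ^ 2)⁻¹ ≤ (x ^ 2)⁻¹ :=
        inv_anti₀ (by positivity) (by linarith)
      calc F x = x * (Real.sqrt (1 + x ^ 4) + x ^ 2)⁻¹ := by rw [hF]; simp only; rw [hkey]
        _ ≤ x * (x ^ 2)⁻¹ := by
            exact mul_le_mul_of_nonneg_left h5 hx0.le
        _ = x⁻¹ := by
            rw [sq, mul_inv, ← mul_assoc, mul_inv_cancel₀ hx0.ne', one_mul]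
    have hlow : ∀ x : ℝ, 0 ≤ x → 0 ≤ F x := fun x hx =>
      mul_nonneg hx (g_nonneg x)
    refine tendsto_of_tendsto_of_tendsto_of_le_of_le' tendsto_const_nhds
      tendsto_inv_atTop_zero ?_ ?_
    · exact Filter.eventually_atTop.mpr ⟨0, fun x hx => hlow x hx⟩
    · exact Filter.eventually_atTop.mpr ⟨1, fun x hx => hup x hx⟩
  have := integral_Ioi_of_hasDerivAt_of_tendsto
    (hFc.continuousWithinAt) hderiv hint htend
  rw [this]
  simp [hF]

lemma integral_g_Ioi :
    ∫ x in Ioi (0:ℝ), (Real.sqrt (1 + x ^ 4) - x ^ 2)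
      = Real.Gamma (1/4) ^ 2 / (6 * Real.sqrt π) := by
  have h0 := ibp_zero
  rw [integral_sub ((g_integrable.const_mul 3).integrableOn)
    ((h_integrable.const_mul 2).integrableOn),
    MeasureTheory.integral_const_mul, MeasureTheory.integral_const_mul,
    integral_inv_sqrt_one_add_pow4] at h0
  have hπ : (0:ℝ) < Real.sqrt π := Real.sqrt_pos.mpr Real.pi_pos
  have : (3:ℝ) * ∫ x in Ioi (0:ℝ), (Real.sqrt (1 + x ^ 4) - x ^ 2)
      = 2 * (Real.Gamma (1/4) ^ 2 / (4 * Real.sqrt π)) := by linarith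
  field_simp at this ⊢
  linarith

/-- ∫_ℝ (√(1 + y⁴/4) - y²/2) dy = 3 Γ(-3/4)² / (8 √(2π)). -/
theorem integral_f0_value :
    Integrable (fun y : ℝ => Real.sqrt (1 + y ^ 4 / 4) - y ^ 2 / 2) ∧
    (∫ y : ℝ, (Real.sqrt (1 + y ^ 4 / 4) - y ^ 2 / 2))
      = 3 * (Real.Gamma (-3/4)) ^ 2 / (8 * Real.sqrt (2 * Real.pi)) := by
  have h2 : Real.sqrt 2 ^ 2 = 2 := Real.sq_sqrt (by norm_num)
  have h2pos : (0:ℝ) < Real.sqrt 2 := Real.sqrt_pos.mpr (by norm_num)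
  have hfun : ∀ y : ℝ, Real.sqrt (1 + (y / Real.sqrt 2) ^ 4) - (y / Real.sqrt 2) ^ 2
      = Real.sqrt (1 + y ^ 4 / 4) - y ^ 2 / 2 := by
    intro y
    have e1 : (y / Real.sqrt 2) ^ 2 = y ^ 2 / 2 := by
      rw [div_pow, h2]
    have e2 : (y / Real.sqrt 2) ^ 4 = y ^ 4 / 4 := by
      rw [div_pow, show (4:ℕ) = 2 * 2 from rfl, pow_mul, pow_mul, h2]
      norm_num
    rw [e1, e2]
  constructor
  · have := (g_integrable.comp_div (R := Real.sqrt 2) (by positivity))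
    -- Integrable fun x => g (x / √2)
    exact this.congr (Filter.Eventually.of_forall fun y => hfun y)
  · have hscale := MeasureTheory.Measure.integral_comp_div
      (fun x : ℝ => Real.sqrt (1 + x ^ 4) - x ^ 2) (Real.sqrt 2)
    have heven := integral_comp_abs (f := fun x : ℝ => Real.sqrt (1 + x ^ 4) - x ^ 2)
    have habs : ∀ x : ℝ, Real.sqrt (1 + |x| ^ 4) - |x| ^ 2
        = Real.sqrt (1 + x ^ 4) - x ^ 2 := by
      intro x
      rw [show |x| ^ 4 = x ^ 4 by rw [pow_abs, abs_of_nonneg (by positivity)],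
        show |x| ^ 2 = x ^ 2 by rw [pow_abs, abs_of_nonneg (by positivity)]]
    have heven' : (∫ x : ℝ, (Real.sqrt (1 + x ^ 4) - x ^ 2))
        = 2 * ∫ x in Ioi (0:ℝ), (Real.sqrt (1 + x ^ 4) - x ^ 2) := by
      rw [← heven]
      exact integral_congr_ae (Filter.Eventually.of_forall fun x => (habs x).symm)
    have hval : (∫ y : ℝ, (Real.sqrt (1 + y ^ 4 / 4) - y ^ 2 / 2))
        = Real.sqrt 2 * (2 * (Real.Gamma (1/4) ^ 2 / (6 * Real.sqrt π))) := by
      rw [← integral_g_Ioi, ← heven']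
      rw [show (∫ y : ℝ, (Real.sqrt (1 + y ^ 4 / 4) - y ^ 2 / 2))
          = ∫ y : ℝ, (Real.sqrt (1 + (y / Real.sqrt 2) ^ 4) - (y / Real.sqrt 2) ^ 2) from
        integral_congr_ae (Filter.Eventually.of_forall fun y => (hfun y).symm)]
      rw [hscale, abs_of_pos h2pos, smul_eq_mul]
    rw [hval]
    -- final arithmetic
    have hΓ : Real.Gamma (1/4) = (-(3:ℝ)/4) * Real.Gamma (-3/4) := by
      rw [show (1/4 : ℝ) = -3/4 + 1 by norm_num, Real.Gamma_add_one (by norm_num)]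
    have hsplit : Real.sqrt (2 * π) = Real.sqrt 2 * Real.sqrt π :=
      Real.sqrt_mul (by norm_num) π
    have hπ : (0:ℝ) < Real.sqrt π := Real.sqrt_pos.mpr Real.pi_pos
    rw [hΓ, hsplit]
    field_simp
    linear_combination (48 * Real.Gamma (-(3/4)) ^ 2) * h2
end

section
/- The integral ∫_{-∞}^{∞} (1/2)(1 - y²/√(y⁴+4)) dy equals √(2/π)·Γ(3/4)². -/
open MeasureTheory

open Set Filter Real

open MeasureTheory Set Filter Real

noncomputable def gg (y : ℝ) : ℝ := 1 - y ^ 2 / Real.sqrt (y ^ 4 + 4)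
noncomputable def hh (y : ℝ) : ℝ := 8 * y ^ 2 / (Real.sqrt (y ^ 4 + 4)) ^ 3

lemma base_pos (y : ℝ) : (0:ℝ) < y ^ 4 + 4 := by positivity

lemma sqrt_base_pos (y : ℝ) : 0 < Real.sqrt (y ^ 4 + 4) :=
  Real.sqrt_pos.2 (base_pos y)

lemma sq_le_sqrt_base (y : ℝ) : y ^ 2 ≤ Real.sqrt (y ^ 4 + 4) := by
  have h : y ^ 2 = Real.sqrt (y ^ 4) := by
    rw [show y ^ 4 = (y ^ 2) ^ 2 by ring, Real.sqrt_sq (by positivity)]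
  rw [h]
  exact Real.sqrt_le_sqrt (by linarith)

lemma gg_nonneg (y : ℝ) : 0 ≤ gg y := by
  have h1 := sqrt_base_pos y
  have h2 := sq_le_sqrt_base y
  have : y ^ 2 / Real.sqrt (y ^ 4 + 4) ≤ 1 := by
    rw [div_le_one h1]; exact h2
  simp only [gg]; linarith

lemma gg_le_one (y : ℝ) : gg y ≤ 1 := by
  have h1 := sqrt_base_pos y
  have : 0 ≤ y ^ 2 / Real.sqrt (y ^ 4 + 4) := by positivity
  simp only [gg]; linarith

lemma gg_eq (y : ℝ) : gg y = 4 / (Real.sqrt (y ^ 4 + 4) * (Real.sqrt (y ^ 4 + 4) + y ^ 2)) := by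
  have h1 := sqrt_base_pos y
  have hs : Real.sqrt (y ^ 4 + 4) ^ 2 = y ^ 4 + 4 := Real.sq_sqrt (base_pos y).le
  have h2 : 0 < Real.sqrt (y ^ 4 + 4) + y ^ 2 := by positivity
  rw [gg]
  field_simp
  nlinarith [hs]

lemma gg_le (y : ℝ) (hy : 1 ≤ y) : gg y ≤ 4 * y ^ (-4 : ℝ) := by
  have h1 := sqrt_base_pos y
  have h2 := sq_le_sqrt_base y
  have hy0 : (0:ℝ) < y := lt_of_lt_of_le one_pos hy
  have h4 : (y:ℝ) ^ (-4:ℝ) = (y^4)⁻¹ := by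
    rw [Real.rpow_neg hy0.le, show ((4:ℝ) = ((4:ℕ):ℝ)) by norm_num, Real.rpow_natCast]
  rw [gg_eq, h4]
  rw [div_le_iff₀ (by positivity)]
  have hy2 : y ^ 2 ≤ Real.sqrt (y ^ 4 + 4) + y ^ 2 := le_add_of_nonneg_left h1.le
  have hy4 : (0:ℝ) < y ^ 4 := by positivity
  have key : y ^ 2 * y ^ 2 ≤ Real.sqrt (y ^ 4 + 4) * (Real.sqrt (y ^ 4 + 4) + y ^ 2) :=
    mul_le_mul h2 hy2 (by positivity) h1.le
  have : (4:ℝ) = 4 * (y ^ 4)⁻¹ * (y ^ 2 * y ^ 2) := by field_simp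
  calc (4:ℝ) = 4 * (y ^ 4)⁻¹ * (y ^ 2 * y ^ 2) := this
    _ ≤ 4 * (y ^ 4)⁻¹ * (Real.sqrt (y ^ 4 + 4) * (Real.sqrt (y ^ 4 + 4) + y ^ 2)) :=
        mul_le_mul_of_nonneg_left key (by positivity)

lemma cont_gg : Continuous gg := by
  apply Continuous.sub continuous_const
  apply Continuous.div (by continuity)
  · exact Real.continuous_sqrt.comp (by continuity)
  · intro y; exact (sqrt_base_pos y).ne'

lemma cont_hh : Continuous hh := by
  apply Continuous.div (by continuity)
  · exact ((Real.continuous_sqrt.comp (by continuity)).pow 3)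
  · intro y; exact (pow_ne_zero 3 (sqrt_base_pos y).ne')

lemma hh_nonneg (y : ℝ) : 0 ≤ hh y := by
  have := sqrt_base_pos y
  simp only [hh]; positivity

lemma hh_le (y : ℝ) (hy : 1 ≤ y) : hh y ≤ 8 * y ^ (-4 : ℝ) := by
  have h1 := sqrt_base_pos y
  have h2 := sq_le_sqrt_base y
  have hy0 : (0:ℝ) < y := lt_of_lt_of_le one_pos hy
  have h4 : (y:ℝ) ^ (-4:ℝ) = (y^4)⁻¹ := by
    rw [Real.rpow_neg hy0.le, show ((4:ℝ) = ((4:ℕ):ℝ)) by norm_num, Real.rpow_natCast]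
  have key : (y ^ 2) ^ 3 ≤ Real.sqrt (y ^ 4 + 4) ^ 3 := by
    apply pow_le_pow_left₀ (by positivity) h2
  rw [hh, h4, div_le_iff₀ (by positivity)]
  calc 8 * y ^ 2 = 8 * (y^4)⁻¹ * (y^2)^3 := by field_simp
    _ ≤ 8 * (y^4)⁻¹ * Real.sqrt (y ^ 4 + 4) ^ 3 :=
        mul_le_mul_of_nonneg_left key (by positivity)
    _ = 8 * (y^4)⁻¹ * Real.sqrt (y ^ 4 + 4) ^ 3 := rfl

lemma integrable_rpow_tail : IntegrableOn (fun y : ℝ => y ^ (-4:ℝ)) (Ioi 1) :=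
  integrableOn_Ioi_rpow_of_lt (by norm_num) one_pos

lemma gg_integrableOn_Ioi : IntegrableOn gg (Ioi 0) := by
  have h1 : IntegrableOn gg (Ioc 0 1) :=
    cont_gg.continuousOn.integrableOn_compact isCompact_Icc |>.mono_set Ioc_subset_Icc_self
  have h2 : IntegrableOn gg (Ioi 1) := by
    apply Integrable.mono (integrable_rpow_tail.const_mul 4)
      (cont_gg.aestronglyMeasurable.restrict)
    filter_upwards [ae_restrict_mem measurableSet_Ioi] with y hy
    rw [Real.norm_eq_abs, Real.norm_eq_abs, abs_of_nonneg (gg_nonneg y)]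
    have hy1 : (1:ℝ) ≤ y := le_of_lt hy
    have := gg_le y hy1
    have h4 : (0:ℝ) ≤ 4 * y ^ (-4:ℝ) := by positivity
    rw [abs_of_nonneg h4]
    exact this
  have := h1.union h2
  rwa [Ioc_union_Ioi_eq_Ioi (by norm_num : (0:ℝ) ≤ 1)] at this

lemma hh_integrableOn_Ioi : IntegrableOn hh (Ioi 0) := by
  have h1 : IntegrableOn hh (Ioc 0 1) :=
    cont_hh.continuousOn.integrableOn_compact isCompact_Icc |>.mono_set Ioc_subset_Icc_self
  have h2 : IntegrableOn hh (Ioi 1) := by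
    apply Integrable.mono (integrable_rpow_tail.const_mul 8)
      (cont_hh.aestronglyMeasurable.restrict)
    filter_upwards [ae_restrict_mem measurableSet_Ioi] with y hy
    rw [Real.norm_eq_abs, Real.norm_eq_abs, abs_of_nonneg (hh_nonneg y)]
    have := hh_le y (le_of_lt hy)
    have h4 : (0:ℝ) ≤ 8 * y ^ (-4:ℝ) :=
      mul_nonneg (by norm_num) (Real.rpow_nonneg (le_trans zero_le_one (le_of_lt hy)) _)
    rw [abs_of_nonneg h4]
    exact this
  have := h1.union h2
  rwa [Ioc_union_Ioi_eq_Ioi (by norm_num : (0:ℝ) ≤ 1)] at this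

lemma even_gg (y : ℝ) : gg (-y) = gg y := by
  simp only [gg]; ring_nf

lemma gg_integrable : Integrable gg := by
  have int_Iic : IntegrableOn gg (Iic 0) := by
    rw [← Measure.map_neg_eq_self (volume : Measure ℝ)]
    have m : MeasurableEmbedding fun x : ℝ => -x := (Homeomorph.neg ℝ).measurableEmbedding
    rw [m.integrableOn_map_iff]
    simp_rw [Function.comp_def, even_gg, neg_preimage, neg_Iic, neg_zero]
    exact Iff.mpr integrableOn_Ici_iff_integrableOn_Ioi gg_integrableOn_Ioi
  have := int_Iic.union gg_integrableOn_Ioi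
  rwa [Iic_union_Ioi, integrableOn_univ] at this

noncomputable def HH (y : ℝ) : ℝ := y - y ^ 3 / Real.sqrt (y ^ 4 + 4)

lemma HH_hasDeriv (y : ℝ) : HasDerivAt HH (gg y - hh y) y := by
  have hs := sqrt_base_pos y
  have hsq : Real.sqrt (y ^ 4 + 4) ^ 2 = y ^ 4 + 4 := Real.sq_sqrt (base_pos y).le
  have h1 : HasDerivAt (fun y : ℝ => y ^ 4 + 4) (4 * y ^ 3) y := by
    simpa using ((hasDerivAt_pow 4 y).add_const 4)
  have h2 : HasDerivAt (fun y : ℝ => Real.sqrt (y ^ 4 + 4))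
      (4 * y ^ 3 / (2 * Real.sqrt (y ^ 4 + 4))) y :=
    (Real.hasDerivAt_sqrt (base_pos y).ne').comp y h1 |>.congr_deriv (by ring)
  have h3 : HasDerivAt (fun y : ℝ => y ^ 3) (3 * y ^ 2) y := by
    simpa using hasDerivAt_pow 3 y
  have h4 : HasDerivAt (fun y : ℝ => y ^ 3 / Real.sqrt (y ^ 4 + 4))
      ((3 * y ^ 2 * Real.sqrt (y ^ 4 + 4) - y ^ 3 * (4 * y ^ 3 / (2 * Real.sqrt (y ^ 4 + 4)))) /
        Real.sqrt (y ^ 4 + 4) ^ 2) y := h3.div h2 hs.ne'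
  have h5 : HasDerivAt HH
      (1 - (3 * y ^ 2 * Real.sqrt (y ^ 4 + 4) - y ^ 3 * (4 * y ^ 3 / (2 * Real.sqrt (y ^ 4 + 4)))) /
        Real.sqrt (y ^ 4 + 4) ^ 2) y := (hasDerivAt_id y).sub h4 |>.congr_deriv (by ring)
  convert h5 using 1
  simp only [gg, hh]
  field_simp
  linear_combination (4 * y ^ 2) * hsq

lemma HH_tendsto : Tendsto HH atTop (nhds 0) := by
  have hbound : ∀ y : ℝ, 1 ≤ y → |HH y| ≤ 4 * y ^ (-3:ℝ) := by
    intro y hy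
    have hy0 : (0:ℝ) < y := lt_of_lt_of_le one_pos hy
    have hHH : HH y = y * gg y := by
      simp only [HH, gg]; field_simp
    have h1 : 0 ≤ HH y := by
      rw [hHH]; exact mul_nonneg hy0.le (gg_nonneg y)
    rw [abs_of_nonneg h1, hHH]
    have := gg_le y hy
    calc y * gg y ≤ y * (4 * y ^ (-4:ℝ)) :=
          mul_le_mul_of_nonneg_left this hy0.le
      _ = 4 * y ^ (-3:ℝ) := by
          rw [show y * (4 * y ^ (-4:ℝ)) = 4 * (y ^ (1:ℝ) * y ^ (-4:ℝ)) by
            rw [Real.rpow_one]; ring, ← Real.rpow_add hy0]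
          norm_num
  have hlim : Tendsto (fun y : ℝ => 4 * y ^ (-3:ℝ)) atTop (nhds 0) := by
    have := tendsto_rpow_neg_atTop (by norm_num : (0:ℝ) < 3)
    simpa using this.const_mul 4
  rw [← sub_zero HH] at *
  apply squeeze_zero_norm' _ hlim
  filter_upwards [eventually_ge_atTop (1:ℝ)] with y hy
  simpa using hbound y hy

lemma integral_gg_eq_hh : ∫ y in Ioi (0:ℝ), gg y = ∫ y in Ioi (0:ℝ), hh y := by
  have hint : IntegrableOn (fun y => gg y - hh y) (Ioi 0) :=
    gg_integrableOn_Ioi.sub hh_integrableOn_Ioi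
  have hFTC : ∀ R : ℝ, ∫ y in (0:ℝ)..R, (gg y - hh y) = HH R := by
    intro R
    have : ∫ y in (0:ℝ)..R, (gg y - hh y) = HH R - HH 0 := by
      apply intervalIntegral.integral_eq_sub_of_hasDerivAt
      · intro y _; exact HH_hasDeriv y
      · exact (cont_gg.sub cont_hh).intervalIntegrable 0 R
    rw [this]
    simp [HH]
  have T1 : Tendsto (fun R : ℝ => ∫ y in (0:ℝ)..R, (gg y - hh y)) atTop
      (nhds (∫ y in Ioi (0:ℝ), (gg y - hh y))) :=
    intervalIntegral_tendsto_integral_Ioi 0 hint tendsto_id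
  have T2 : Tendsto (fun R : ℝ => ∫ y in (0:ℝ)..R, (gg y - hh y)) atTop (nhds 0) := by
    simp_rw [hFTC]; exact HH_tendsto
  have h0 : ∫ y in Ioi (0:ℝ), (gg y - hh y) = 0 := tendsto_nhds_unique T1 T2
  rw [integral_sub gg_integrableOn_Ioi hh_integrableOn_Ioi] at h0
  linarith

lemma step7a : ∫ y in Ioi (0:ℝ), hh y
    = ∫ x in Ioi (0:ℝ), 2 * (x ^ (-(1/4):ℝ) * (x + 4) ^ (-(3:ℝ)/2)) := by
  rw [← integral_comp_rpow_Ioi hh (by norm_num : (1/4:ℝ) ≠ 0)]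
  apply setIntegral_congr_fun measurableSet_Ioi
  intro x hx
  have hx0 : (0:ℝ) < x := hx
  have h14 : (x ^ ((1:ℝ)/4)) ^ 4 = x := by
    rw [← Real.rpow_natCast (x ^ ((1:ℝ)/4)) 4, ← Real.rpow_mul hx0.le]
    norm_num
  have h12 : (x ^ ((1:ℝ)/4)) ^ 2 = x ^ ((1:ℝ)/2) := by
    rw [← Real.rpow_natCast (x ^ ((1:ℝ)/4)) 2, ← Real.rpow_mul hx0.le]
    norm_num
  have hsqrt : Real.sqrt (x + 4) ^ 3 = (x + 4) ^ ((3:ℝ)/2) := by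
    rw [Real.sqrt_eq_rpow, ← Real.rpow_natCast ((x+4) ^ ((1:ℝ)/2)) 3,
      ← Real.rpow_mul (by positivity)]
    norm_num
  simp only [smul_eq_mul, hh, h14, h12, hsqrt]
  rw [Real.rpow_neg hx0.le, show ((-3:ℝ)/2) = -((3:ℝ)/2) by norm_num,
    Real.rpow_neg (by positivity : (0:ℝ) ≤ x + 4)]
  rw [show |(1:ℝ)/4| = 1/4 by norm_num]
  rw [show ((1:ℝ)/4 - 1) = (-(3/4):ℝ) by norm_num]
  rw [Real.rpow_neg hx0.le]
  have e1 : x ^ ((3:ℝ)/4) * x ^ ((1:ℝ)/4) = x := by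
    rw [← Real.rpow_add hx0]; norm_num
  have e2 : x ^ ((1:ℝ)/2) = x ^ ((1:ℝ)/4) * x ^ ((1:ℝ)/4) := by
    rw [← Real.rpow_add hx0]; norm_num
  have h34 : (0:ℝ) < x ^ ((3:ℝ)/4) := Real.rpow_pos_of_pos hx0 _
  have h14' : (0:ℝ) < x ^ ((1:ℝ)/4) := Real.rpow_pos_of_pos hx0 _
  have h32 : (0:ℝ) < (x+4) ^ ((3:ℝ)/2) := Real.rpow_pos_of_pos (by positivity) _
  have e3 : (x ^ ((1:ℝ)/4)) ^ 3 = x ^ ((3:ℝ)/4) := by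
    rw [← Real.rpow_natCast (x ^ ((1:ℝ)/4)) 3, ← Real.rpow_mul hx0.le]
    norm_num
  field_simp
  rw [e2]
  nlinarith [e3, h14', h32]

lemma step7b : (∫ u in Ioo (0:ℝ) 1, u ^ (-(1/4):ℝ) * (1-u) ^ (-(1/4):ℝ))
    = ∫ x in Ioi (0:ℝ), (4:ℝ) ^ ((3:ℝ)/4) * (x ^ (-(1/4):ℝ) * (x + 4) ^ (-(3:ℝ)/2)) := by
  have himg : (fun x : ℝ => x / (x + 4)) '' Ioi 0 = Ioo 0 1 := by
    ext u
    constructor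
    · rintro ⟨x, hx, rfl⟩
      have hx0 : (0:ℝ) < x := hx
      have ha : (0:ℝ) < x + 4 := by linarith
      constructor
      · positivity
      · rw [div_lt_one ha]; linarith
    · rintro ⟨hu0, hu1⟩
      refine ⟨4 * u / (1 - u), ?_, ?_⟩
      · have : (0:ℝ) < 1 - u := by linarith
        exact div_pos (by linarith) this
      · have h1 : (0:ℝ) < 1 - u := by linarith
        field_simp
        ring
  have hderiv : ∀ x ∈ Ioi (0:ℝ), HasDerivWithinAt (fun x : ℝ => x / (x + 4))
      (4 / (x + 4) ^ 2) (Ioi 0) x := by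
    intro x hx
    have ha : x + 4 ≠ 0 := by simp only [mem_Ioi] at hx; intro h; linarith
    have : HasDerivAt (fun x : ℝ => x / (x + 4))
        ((1 * (x + 4) - x * 1) / (x + 4) ^ 2) x :=
      (hasDerivAt_id x).div ((hasDerivAt_id x).add_const 4) ha
    exact (this.congr_deriv (by ring)).hasDerivWithinAt
  have hinj : InjOn (fun x : ℝ => x / (x + 4)) (Ioi 0) := by
    intro a ha b hb hab
    simp only [mem_Ioi] at ha hb
    have ha4 : a + 4 ≠ 0 := by intro h; linarith
    have hb4 : b + 4 ≠ 0 := by intro h; linarith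
    simp only at hab
    rw [div_eq_div_iff ha4 hb4] at hab
    nlinarith [hab]
  have := integral_image_eq_integral_abs_deriv_smul measurableSet_Ioi hderiv hinj
    (fun u => u ^ (-(1/4):ℝ) * (1-u) ^ (-(1/4):ℝ))
  rw [himg] at this
  rw [this]
  apply setIntegral_congr_fun measurableSet_Ioi
  intro x hx
  have hx0 : (0:ℝ) < x := hx
  have ha : (0:ℝ) < x + 4 := by linarith
  have h1 : 1 - x / (x + 4) = 4 / (x + 4) := by field_simp; ring
  have hxq : (0:ℝ) < x ^ ((1:ℝ)/4) := Real.rpow_pos_of_pos hx0 _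
  have haq : (0:ℝ) < (x+4) ^ ((1:ℝ)/4) := Real.rpow_pos_of_pos ha _
  have h4q : (0:ℝ) < (4:ℝ) ^ ((1:ℝ)/4) := Real.rpow_pos_of_pos (by norm_num) _
  have h2 : (x / (x + 4)) ^ (-(1/4):ℝ) = (x+4) ^ ((1:ℝ)/4) / x ^ ((1:ℝ)/4) := by
    rw [show (-(1/4):ℝ) = -((1:ℝ)/4) by norm_num, Real.rpow_neg (by positivity),
      Real.div_rpow hx0.le ha.le, inv_div]
  have h3 : ((4:ℝ) / (x + 4)) ^ (-(1/4):ℝ) = (x+4) ^ ((1:ℝ)/4) / 4 ^ ((1:ℝ)/4) := by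
    rw [show (-(1/4):ℝ) = -((1:ℝ)/4) by norm_num, Real.rpow_neg (by positivity),
      Real.div_rpow (by norm_num : (0:ℝ) ≤ 4) ha.le, inv_div]
  have hxn : x ^ (-(1/4):ℝ) = 1 / x ^ ((1:ℝ)/4) := by
    rw [show (-(1/4):ℝ) = -((1:ℝ)/4) by norm_num, Real.rpow_neg hx0.le]
    exact (one_div _).symm
  have han : (x+4) ^ (-(3:ℝ)/2) = 1 / (x+4) ^ ((3:ℝ)/2) := by
    rw [show ((-3:ℝ)/2) = -((3:ℝ)/2) by norm_num, Real.rpow_neg ha.le]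
    exact (one_div _).symm
  have haa : (x+4) ^ ((1:ℝ)/4) * (x+4) ^ ((1:ℝ)/4) = (x+4) ^ ((1:ℝ)/2) := by
    rw [← Real.rpow_add ha]; norm_num
  have hsq : (x+4) ^ 2 = (x+4) ^ ((1:ℝ)/2) * (x+4) ^ ((3:ℝ)/2) := by
    rw [← Real.rpow_add ha, ← Real.rpow_natCast (x+4) 2]; norm_num
  have h44 : (4:ℝ) ^ ((1:ℝ)/4) * 4 ^ ((3:ℝ)/4) = 4 := by
    rw [← Real.rpow_add (by norm_num : (0:ℝ) < 4)]; norm_num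
  have h12 : (0:ℝ) < (x+4) ^ ((1:ℝ)/2) := Real.rpow_pos_of_pos ha _
  have h32 : (0:ℝ) < (x+4) ^ ((3:ℝ)/2) := Real.rpow_pos_of_pos ha _
  have habs : |4 / (x + 4) ^ 2| = 4 / (x + 4) ^ 2 := abs_of_pos (by positivity)
  simp only [smul_eq_mul, h1, h2, h3, hxn, han, habs]
  rw [hsq]
  field_simp
  linear_combination 4 * haa - (x+4) ^ ((1:ℝ)/2) * h44

lemma beta_val : (∫ u in Ioo (0:ℝ) 1, u ^ (-(1/4):ℝ) * (1-u) ^ (-(1/4):ℝ))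
    = 2 * Real.Gamma (3/4) ^ 2 / Real.sqrt π := by
  have hre : (0:ℝ) < Complex.re (3/4) := by norm_num
  have hB := Complex.Gamma_mul_Gamma_eq_betaIntegral hre hre
  rw [show ((3:ℂ)/4 + 3/4) = 3/2 by norm_num] at hB
  have hBr : Complex.betaIntegral (3/4) (3/4)
      = ((∫ u in Ioo (0:ℝ) 1, u ^ (-(1/4):ℝ) * (1-u) ^ (-(1/4):ℝ) : ℝ) : ℂ) := by
    rw [Complex.betaIntegral]
    have hcongr : ∀ x ∈ uIcc (0:ℝ) 1,
        (x:ℂ) ^ ((3:ℂ)/4 - 1) * (1 - (x:ℂ)) ^ ((3:ℂ)/4 - 1)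
          = ((x ^ (-(1/4):ℝ) * (1-x) ^ (-(1/4):ℝ) : ℝ) : ℂ) := by
      intro x hx
      rw [uIcc_of_le zero_le_one] at hx
      obtain ⟨hx0, hx1⟩ := hx
      have e1 : ((x ^ (-(1/4):ℝ) : ℝ) : ℂ) = (x:ℂ) ^ ((3:ℂ)/4 - 1) := by
        rw [Complex.ofReal_cpow hx0]
        norm_num
      have e2 : (((1-x) ^ (-(1/4):ℝ) : ℝ) : ℂ) = (1 - (x:ℂ)) ^ ((3:ℂ)/4 - 1) := by
        rw [Complex.ofReal_cpow (by linarith)]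
        push_cast
        norm_num
      rw [Complex.ofReal_mul, e1, e2]
    rw [intervalIntegral.integral_congr hcongr, intervalIntegral.integral_ofReal]
    norm_cast
    rw [intervalIntegral.integral_of_le zero_le_one, integral_Ioc_eq_integral_Ioo]
  rw [hBr] at hB
  have hG34 : Complex.Gamma (3/4) = (Real.Gamma (3/4) : ℂ) := by
    rw [show ((3:ℂ)/4) = ((3/4 : ℝ) : ℂ) by norm_num, Complex.Gamma_ofReal]
  have hG32 : Complex.Gamma (3/2) = (Real.Gamma (3/2) : ℂ) := by
    rw [show ((3:ℂ)/2) = ((3/2 : ℝ) : ℂ) by norm_num, Complex.Gamma_ofReal]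
  rw [hG34, hG32] at hB
  have hBreal : Real.Gamma (3/4) * Real.Gamma (3/4)
      = Real.Gamma (3/2) * ∫ u in Ioo (0:ℝ) 1, u ^ (-(1/4):ℝ) * (1-u) ^ (-(1/4):ℝ) := by
    exact_mod_cast hB
  have hG32v : Real.Gamma (3/2) = Real.sqrt π / 2 := by
    have h := Real.Gamma_add_one (by norm_num : (1/2:ℝ) ≠ 0)
    rw [Real.Gamma_one_half_eq] at h
    rw [show (3/2:ℝ) = 1/2 + 1 by norm_num, h]
    ring
  rw [hG32v] at hBreal
  have hpi : (0:ℝ) < Real.sqrt π := Real.sqrt_pos.2 Real.pi_pos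
  field_simp at hBreal ⊢
  nlinarith [hBreal]

lemma gg_abs (y : ℝ) : gg |y| = gg y := by
  rcases le_or_gt 0 y with h | h
  · rw [abs_of_nonneg h]
  · rw [abs_of_neg h, even_gg]

lemma sqrt2_val : (4:ℝ) ^ ((1:ℝ)/4) = Real.sqrt 2 := by
  have h4 : (4:ℝ) = 2 ^ (2:ℝ) := by
    rw [show (2:ℝ) = ((2:ℕ):ℝ) from by norm_num, Real.rpow_natCast]
    norm_num
  rw [h4, ← Real.rpow_mul (by norm_num), Real.sqrt_eq_rpow]
  norm_num

/-- ∫_ℝ (1/2)(1 - y²/√(y⁴+4)) dy = √(2/π) Γ(3/4)². -/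
theorem integral_f1_value :
    Integrable (fun y : ℝ => (1/2) * (1 - y ^ 2 / Real.sqrt (y ^ 4 + 4))) ∧
    (∫ y : ℝ, (1/2) * (1 - y ^ 2 / Real.sqrt (y ^ 4 + 4)))
      = Real.sqrt (2 / Real.pi) * (Real.Gamma (3/4)) ^ 2 := by
  have hint : Integrable (fun y : ℝ => (1/2) * (1 - y ^ 2 / Real.sqrt (y ^ 4 + 4))) := by
    have := gg_integrable.const_mul (1/2)
    exact this
  refine ⟨hint, ?_⟩
  have h1 : (∫ y : ℝ, (1/2) * (1 - y ^ 2 / Real.sqrt (y ^ 4 + 4)))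
      = ∫ y : ℝ, (fun t => (1/2) * gg t) |y| := by
    congr 1 with y
    simp only [gg_abs, gg, sq_abs, (by decide : Even 4).pow_abs]
  rw [h1, integral_comp_abs (f := fun t => 1/2 * gg t)]
  have h2 : (∫ y in Ioi (0:ℝ), (1/2) * gg y) = (1/2) * ∫ y in Ioi (0:ℝ), gg y :=
    MeasureTheory.integral_const_mul _ _
  rw [h2, integral_gg_eq_hh, step7a]
  set J := ∫ x in Ioi (0:ℝ), x ^ (-(1/4):ℝ) * (x + 4) ^ (-(3:ℝ)/2) with hJ
  have h3 : (∫ x in Ioi (0:ℝ), 2 * (x ^ (-(1/4):ℝ) * (x + 4) ^ (-(3:ℝ)/2))) = 2 * J :=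
    MeasureTheory.integral_const_mul _ _
  have h4 : (∫ x in Ioi (0:ℝ), (4:ℝ) ^ ((3:ℝ)/4) * (x ^ (-(1/4):ℝ) * (x + 4) ^ (-(3:ℝ)/2)))
      = (4:ℝ) ^ ((3:ℝ)/4) * J := MeasureTheory.integral_const_mul _ _
  have h5 : (4:ℝ) ^ ((3:ℝ)/4) * J = 2 * Real.Gamma (3/4) ^ 2 / Real.sqrt π := by
    rw [← h4, ← step7b, beta_val]
  have hc : (0:ℝ) < (4:ℝ) ^ ((3:ℝ)/4) := Real.rpow_pos_of_pos (by norm_num) _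
  have hcs : (4:ℝ) ^ ((3:ℝ)/4) * Real.sqrt 2 = 4 := by
    rw [← sqrt2_val, ← Real.rpow_add (by norm_num : (0:ℝ) < 4)]
    norm_num
  have hpi : (0:ℝ) < Real.sqrt π := Real.sqrt_pos.2 Real.pi_pos
  have hsqrt2pi : Real.sqrt (2 / π) = Real.sqrt 2 / Real.sqrt π :=
    Real.sqrt_div (by norm_num) π
  rw [h3]
  have hJv : J = 2 * Real.Gamma (3/4) ^ 2 / Real.sqrt π / ((4:ℝ) ^ ((3:ℝ)/4)) := by
    field_simp at h5 ⊢
    linarith [h5]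
  rw [hJv, hsqrt2pi]
  have hs2 : (0:ℝ) < Real.sqrt 2 := Real.sqrt_pos.2 (by norm_num)
  field_simp
  linear_combination (-1:ℝ) * hcs
end

section
/- For the function f₂(y) = (1/2)( (μ²+3)y²/√(y⁶+1) − 3/(y+1) − μ² y⁸/(y⁶+1)^{3/2} ) on [0,∞), one has ∫_0^∞ f₂(y) dy = (1/2)log 2 + μ²/6. -/
open MeasureTheory Set Filter

private lemma rpow_three_half (x : ℝ) (hx : 0 ≤ x) :
    x ^ ((3:ℝ)/2) = Real.sqrt x ^ 3 := by
  rw [Real.sqrt_eq_rpow, ← Real.rpow_natCast (x ^ ((1:ℝ)/2)) 3, ← Real.rpow_mul hx]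
  norm_num

/-- The antiderivative. -/
noncomputable def Fprim (μ : ℝ) (y : ℝ) : ℝ :=
  (1/2) * (Real.arsinh (y ^ 3) - 3 * Real.log (1 + y)
    + μ ^ 2 * (y ^ 3 / (3 * Real.sqrt (1 + y ^ 6))))

lemma hasDerivAt_Fprim (μ : ℝ) {y : ℝ} (hy : 0 ≤ y) :
    HasDerivAt (Fprim μ) ((1/2) * ((μ ^ 2 + 3) * y ^ 2 / Real.sqrt (y ^ 6 + 1)
        - 3 / (y + 1) - μ ^ 2 * y ^ 8 / (y ^ 6 + 1) ^ ((3:ℝ)/2))) y := by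
  have hpos : (0:ℝ) < 1 + y ^ 6 := by positivity
  have hspos : 0 < Real.sqrt (1 + y ^ 6) := Real.sqrt_pos.2 hpos
  have hs2 : Real.sqrt (1 + y ^ 6) ^ 2 = 1 + y ^ 6 := Real.sq_sqrt hpos.le
  have hy1 : (0:ℝ) < 1 + y := by linarith
  have hcube : HasDerivAt (fun y : ℝ => y ^ 3) (3 * y ^ 2) y := by
    simpa using hasDerivAt_pow 3 y
  have h1 : HasDerivAt (fun y : ℝ => Real.arsinh (y ^ 3))
      ((Real.sqrt (1 + (y ^ 3) ^ 2))⁻¹ * (3 * y ^ 2)) y :=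
    by have := (Real.hasDerivAt_arsinh (y ^ 3)).comp y hcube; exact this
  have h16 : ((y:ℝ) ^ 3) ^ 2 = y ^ 6 := by ring
  rw [h16] at h1
  have haddy : HasDerivAt (fun y : ℝ => 1 + y) 1 y := by
    simpa using (hasDerivAt_id y).const_add (1:ℝ)
  have h2 : HasDerivAt (fun y : ℝ => Real.log (1 + y)) ((1 + y)⁻¹ * 1) y :=
    (Real.hasDerivAt_log hy1.ne').comp y haddy
  have hinner : HasDerivAt (fun y : ℝ => 1 + y ^ 6) (6 * y ^ 5) y := by
    simpa using (hasDerivAt_pow 6 y).const_add (1:ℝ)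
  have hsq : HasDerivAt (fun y : ℝ => Real.sqrt (1 + y ^ 6))
      (1 / (2 * Real.sqrt (1 + y ^ 6)) * (6 * y ^ 5)) y :=
    (Real.hasDerivAt_sqrt hpos.ne').comp y hinner
  have hden : HasDerivAt (fun y : ℝ => 3 * Real.sqrt (1 + y ^ 6))
      (3 * (1 / (2 * Real.sqrt (1 + y ^ 6)) * (6 * y ^ 5))) y := hsq.const_mul 3
  have h3 : HasDerivAt (fun y : ℝ => y ^ 3 / (3 * Real.sqrt (1 + y ^ 6)))
      ((3 * y ^ 2 * (3 * Real.sqrt (1 + y ^ 6))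
        - y ^ 3 * (3 * (1 / (2 * Real.sqrt (1 + y ^ 6)) * (6 * y ^ 5))))
        / (3 * Real.sqrt (1 + y ^ 6)) ^ 2) y :=
    hcube.div hden (by positivity)
  have hF := (((h1.sub (h2.const_mul 3)).add (h3.const_mul (μ ^ 2))).const_mul (1/2 : ℝ))
  have hfun : Fprim μ = fun y : ℝ => (1/2 : ℝ) * (Real.arsinh (y ^ 3) - 3 * Real.log (1 + y)
      + μ ^ 2 * (y ^ 3 / (3 * Real.sqrt (1 + y ^ 6)))) := rfl
  rw [hfun]
  refine HasDerivAt.congr_deriv hF ?_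
  rw [show y ^ 6 + 1 = 1 + y ^ 6 by ring, rpow_three_half _ hpos.le]
  field_simp
  ring

lemma f2_nonneg (μ : ℝ) {y : ℝ} (hy : 1 ≤ y) :
    0 ≤ (1/2) * ((μ ^ 2 + 3) * y ^ 2 / Real.sqrt (y ^ 6 + 1)
        - 3 / (y + 1) - μ ^ 2 * y ^ 8 / (y ^ 6 + 1) ^ ((3:ℝ)/2)) := by
  have hy0 : (0:ℝ) < y := lt_of_lt_of_le one_pos hy
  have hpos : (0:ℝ) < y ^ 6 + 1 := by positivity
  have hs : 0 < Real.sqrt (y ^ 6 + 1) := Real.sqrt_pos.2 hpos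
  have hs2 : Real.sqrt (y ^ 6 + 1) ^ 2 = y ^ 6 + 1 := Real.sq_sqrt hpos.le
  rw [rpow_three_half _ hpos.le]
  set s := Real.sqrt (y ^ 6 + 1) with hsdef
  have h5 : (1:ℝ) ≤ y ^ 5 := one_le_pow₀ hy
  have h4 : (1:ℝ) ≤ y ^ 4 := one_le_pow₀ hy
  have hsle : s ≤ y ^ 2 * (y + 1) := by
    rw [hsdef, show y ^ 2 * (y + 1) = Real.sqrt ((y ^ 2 * (y + 1)) ^ 2) from
      (Real.sqrt_sq (by positivity)).symm]
    apply Real.sqrt_le_sqrt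
    nlinarith
  have t1 : 1 / (y + 1) ≤ y ^ 2 / s := by
    rw [div_le_div_iff₀ (by linarith) hs]
    calc 1 * s = s := one_mul s
    _ ≤ y ^ 2 * (y + 1) := hsle
  have t2 : μ ^ 2 * y ^ 8 / s ^ 3 ≤ μ ^ 2 * y ^ 2 / s := by
    rw [div_le_div_iff₀ (by positivity) hs]
    nlinarith [hs2, mul_nonneg (mul_nonneg (sq_nonneg μ) (sq_nonneg y)) hs.le]
  have key : (μ ^ 2 + 3) * y ^ 2 / s = μ ^ 2 * y ^ 2 / s + 3 * (y ^ 2 / s) := by ring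
  have t1' : 3 / (y + 1) ≤ 3 * (y ^ 2 / s) := by
    have := mul_le_mul_of_nonneg_left t1 (by norm_num : (0:ℝ) ≤ 3)
    rw [mul_one_div] at this
    linarith
  have h0 : 0 ≤ (μ ^ 2 + 3) * y ^ 2 / s - 3 / (y + 1) - μ ^ 2 * y ^ 8 / s ^ 3 := by
    rw [key]; linarith
  linarith

/-- auxiliary function giving the limit at infinity via `t = 1/y`. -/
noncomputable def gAux (μ : ℝ) (t : ℝ) : ℝ :=
  (1/2) * (Real.log ((1 + Real.sqrt (t ^ 6 + 1)) / (t + 1) ^ 3)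
    + μ ^ 2 * (1 / (3 * Real.sqrt (t ^ 6 + 1))))

lemma gAux_zero (μ : ℝ) : gAux μ 0 = (1/2) * Real.log 2 + μ ^ 2 / 6 := by
  simp [gAux, Real.sqrt_one]
  norm_num
  ring

lemma gAux_continuousAt (μ : ℝ) : ContinuousAt (gAux μ) 0 := by
  have h2 : ContinuousAt (fun t : ℝ => (1 + Real.sqrt (t ^ 6 + 1)) / (t + 1) ^ 3) 0 := by
    apply ContinuousAt.div (by fun_prop) (by fun_prop)
    norm_num
  have h3 : ContinuousAt Real.log ((1 + Real.sqrt ((0:ℝ) ^ 6 + 1)) / ((0:ℝ) + 1) ^ 3) := by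
    apply Real.continuousAt_log
    simp [Real.sqrt_one]
  have h4 : ContinuousAt (fun t : ℝ => μ ^ 2 * (1 / (3 * Real.sqrt (t ^ 6 + 1)))) 0 := by
    apply ContinuousAt.mul continuousAt_const
    apply ContinuousAt.div continuousAt_const (by fun_prop)
    simp [Real.sqrt_one]
  have h5 : ContinuousAt (fun t : ℝ => Real.log ((1 + Real.sqrt (t ^ 6 + 1)) / (t + 1) ^ 3)) 0 :=
    ContinuousAt.comp (f := fun t : ℝ => (1 + Real.sqrt (t ^ 6 + 1)) / (t + 1) ^ 3) h3 h2
  exact ((h5.add h4).const_mul _)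

lemma Fprim_eq_gAux (μ : ℝ) {y : ℝ} (hy : 1 ≤ y) : Fprim μ y = gAux μ y⁻¹ := by
  have hy0 : (0:ℝ) < y := lt_of_lt_of_le one_pos hy
  have h6 : (0:ℝ) < 1 + y ^ 6 := by positivity
  have hs : 0 < Real.sqrt (1 + y ^ 6) := Real.sqrt_pos.2 h6
  have hy' : y ≠ 0 := hy0.ne'
  have ha : Real.sqrt ((y⁻¹) ^ 6 + 1) = Real.sqrt (1 + y ^ 6) / y ^ 3 := by
    have h1 : (y⁻¹) ^ 6 + 1 = (1 + y ^ 6) / (y ^ 3) ^ 2 := by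
      have hyy : (y⁻¹) ^ 6 * y ^ 6 = 1 := by
        rw [← mul_pow, inv_mul_cancel₀ hy']; norm_num
      rw [eq_div_iff (by positivity : ((y:ℝ) ^ 3) ^ 2 ≠ 0)]
      linear_combination hyy
    rw [h1, Real.sqrt_div h6.le, Real.sqrt_sq (by positivity)]
  have harg : (1 + Real.sqrt (1 + y ^ 6) / y ^ 3) / (y⁻¹ + 1) ^ 3
      = (y ^ 3 + Real.sqrt (1 + y ^ 6)) / (1 + y) ^ 3 := by
    field_simp
  simp only [Fprim, gAux, ha, harg, Real.arsinh]
  rw [show ((y:ℝ) ^ 3) ^ 2 = y ^ 6 by ring,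
    Real.log_div (by positivity) (by positivity), Real.log_pow]
  have : (1:ℝ) / (3 * (Real.sqrt (1 + y ^ 6) / y ^ 3)) = y ^ 3 / (3 * Real.sqrt (1 + y ^ 6)) := by
    field_simp
  rw [this]
  push_cast
  ring

lemma tendsto_Fprim (μ : ℝ) :
    Tendsto (Fprim μ) atTop (nhds ((1/2) * Real.log 2 + μ ^ 2 / 6)) := by
  have h1 : Tendsto (fun y : ℝ => gAux μ y⁻¹) atTop (nhds (gAux μ 0)) :=
    (gAux_continuousAt μ).tendsto.comp tendsto_inv_atTop_zero
  rw [gAux_zero] at h1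
  apply h1.congr'
  filter_upwards [eventually_ge_atTop (1:ℝ)] with y hy
  exact (Fprim_eq_gAux μ hy).symm

lemma f2_contOn (μ : ℝ) : ContinuousOn (fun y : ℝ => (1/2) * ((μ ^ 2 + 3) * y ^ 2 / Real.sqrt (y ^ 6 + 1)
        - 3 / (y + 1) - μ ^ 2 * y ^ 8 / (y ^ 6 + 1) ^ ((3:ℝ)/2))) (Set.Icc (0:ℝ) 1) := by
  apply ContinuousOn.mul continuousOn_const
  apply ContinuousOn.sub
  apply ContinuousOn.sub
  · exact ContinuousOn.div (by fun_prop) (by fun_prop) (fun y hy => by positivity)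
  · exact ContinuousOn.div continuousOn_const (by fun_prop)
      (fun y hy => by have := hy.1; positivity)
  · apply ContinuousOn.div (by fun_prop)
    · exact (Continuous.rpow_const (by continuity) (fun x => Or.inl (by positivity))).continuousOn
    · exact fun y hy => by positivity

/-- The function f₂(y) = (1/2)((μ²+3)y²/√(y⁶+1) − 3/(y+1) − μ²y⁸/(y⁶+1)^{3/2}) is
integrable on (0,∞) and ∫_0^∞ f₂(y) dy = (1/2) log 2 + μ²/6. -/
theorem integral_f2_value (μ : ℝ) :
    IntegrableOn (fun y : ℝ => (1/2) * ((μ ^ 2 + 3) * y ^ 2 / Real.sqrt (y ^ 6 + 1)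
        - 3 / (y + 1) - μ ^ 2 * y ^ 8 / (y ^ 6 + 1) ^ ((3:ℝ)/2))) (Set.Ioi 0) ∧
    (∫ y in Set.Ioi (0:ℝ), (1/2) * ((μ ^ 2 + 3) * y ^ 2 / Real.sqrt (y ^ 6 + 1)
        - 3 / (y + 1) - μ ^ 2 * y ^ 8 / (y ^ 6 + 1) ^ ((3:ℝ)/2)))
      = (1/2) * Real.log 2 + μ ^ 2 / 6 := by
  have hderiv : ∀ y ∈ Set.Ici (1:ℝ), HasDerivAt (Fprim μ)
      ((1/2) * ((μ ^ 2 + 3) * y ^ 2 / Real.sqrt (y ^ 6 + 1)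
        - 3 / (y + 1) - μ ^ 2 * y ^ 8 / (y ^ 6 + 1) ^ ((3:ℝ)/2))) y :=
    fun y hy => hasDerivAt_Fprim μ (le_trans zero_le_one hy)
  have hnonneg : ∀ y ∈ Set.Ioi (1:ℝ), 0 ≤ (1/2) * ((μ ^ 2 + 3) * y ^ 2 / Real.sqrt (y ^ 6 + 1)
        - 3 / (y + 1) - μ ^ 2 * y ^ 8 / (y ^ 6 + 1) ^ ((3:ℝ)/2)) :=
    fun y hy => f2_nonneg μ (le_of_lt hy)
  have htend := tendsto_Fprim μ
  have hint1 : IntegrableOn (fun y : ℝ => (1/2) * ((μ ^ 2 + 3) * y ^ 2 / Real.sqrt (y ^ 6 + 1)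
        - 3 / (y + 1) - μ ^ 2 * y ^ 8 / (y ^ 6 + 1) ^ ((3:ℝ)/2))) (Set.Ioi 1) :=
    integrableOn_Ioi_deriv_of_nonneg' hderiv hnonneg htend
  have hval1 : (∫ y in Set.Ioi (1:ℝ), (1/2) * ((μ ^ 2 + 3) * y ^ 2 / Real.sqrt (y ^ 6 + 1)
        - 3 / (y + 1) - μ ^ 2 * y ^ 8 / (y ^ 6 + 1) ^ ((3:ℝ)/2)))
      = ((1/2) * Real.log 2 + μ ^ 2 / 6) - Fprim μ 1 :=
    integral_Ioi_of_hasDerivAt_of_nonneg' hderiv hnonneg htend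
  have hivi : IntervalIntegrable (fun y : ℝ => (1/2) * ((μ ^ 2 + 3) * y ^ 2 / Real.sqrt (y ^ 6 + 1)
        - 3 / (y + 1) - μ ^ 2 * y ^ 8 / (y ^ 6 + 1) ^ ((3:ℝ)/2))) volume 0 1 :=
    by
      have h : ContinuousOn (fun y : ℝ => (1/2) * ((μ ^ 2 + 3) * y ^ 2 / Real.sqrt (y ^ 6 + 1)
          - 3 / (y + 1) - μ ^ 2 * y ^ 8 / (y ^ 6 + 1) ^ ((3:ℝ)/2))) (Set.uIcc (0:ℝ) 1) := by
        rw [Set.uIcc_of_le zero_le_one]; exact f2_contOn μ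
      exact h.intervalIntegrable
  have hint0 : IntegrableOn (fun y : ℝ => (1/2) * ((μ ^ 2 + 3) * y ^ 2 / Real.sqrt (y ^ 6 + 1)
        - 3 / (y + 1) - μ ^ 2 * y ^ 8 / (y ^ 6 + 1) ^ ((3:ℝ)/2))) (Set.Ioc 0 1) :=
    (intervalIntegrable_iff_integrableOn_Ioc_of_le zero_le_one).1 hivi
  have hval0 : (∫ y in Set.Ioc (0:ℝ) 1, (1/2) * ((μ ^ 2 + 3) * y ^ 2 / Real.sqrt (y ^ 6 + 1)
        - 3 / (y + 1) - μ ^ 2 * y ^ 8 / (y ^ 6 + 1) ^ ((3:ℝ)/2)))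
      = Fprim μ 1 - Fprim μ 0 := by
    rw [← intervalIntegral.integral_of_le zero_le_one]
    exact intervalIntegral.integral_eq_sub_of_hasDerivAt
      (fun y hy => hasDerivAt_Fprim μ (by
        rw [Set.uIcc_of_le zero_le_one] at hy; exact hy.1)) hivi
  have hF0 : Fprim μ 0 = 0 := by
    simp [Fprim]
  have hsplit : Set.Ioi (0:ℝ) = Set.Ioc 0 1 ∪ Set.Ioi 1 :=
    (Set.Ioc_union_Ioi_eq_Ioi zero_le_one).symm
  have hdisj : Disjoint (Set.Ioc (0:ℝ) 1) (Set.Ioi 1) :=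
    Set.disjoint_left.mpr fun x hx hx' => absurd hx.2 (not_le.mpr hx')
  constructor
  · rw [hsplit]; exact hint0.union hint1
  · rw [hsplit, setIntegral_union hdisj measurableSet_Ioi hint0 hint1, hval0, hval1, hF0]
    ring
end
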